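/- arXiv:2104.06970 — 7 statements merged into one kernel-verified Lean document; each statement's English description precedes it below -/
import Mathlib

section
/- For all real numbers k ≥ 1 and α, β > 0, if (1+α)^k ≤ 1 + β·k, then k ≤ (e/(e-1)) · ((1+α)/α) · ln(2β(1+α)/α). -/
/-! With `c = α / (1 + α) ≤ log (1 + α)` and `x = c k`, the hypothesis gives
`exp x ≤ (1 + α) ^ k ≤ 1 + B x` with `B = β / c ≥ 1` (Bernoulli yields `α ≤ β`). Taking logarithms,
`x ≤ log B + log (1 + x) ≤ log (2 B) + x / e`, because `log y ≤ y / e` for `y > 0`;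
solving for `x` gives `x ≤ e / (e - 1) · log (2 B)`, and `k = x / c`. -/

namespace Real

lemma log_le_div_exp_one {x : ℝ} (hx : 0 < x) : log x ≤ x / exp 1 := by
  have := log_le_sub_one_of_pos (div_pos hx (exp_pos 1))
  rwa [log_div hx.ne' (exp_pos 1).ne', log_exp, sub_le_sub_iff_right] at this

lemma log_one_add_le_log_two_add_div_exp_one {x : ℝ} (hx : 0 ≤ x) :
    log (1 + x) ≤ log 2 + x / exp 1 := by
  have hmax : 1 + x ≤ 2 * max 1 x := by linarith [le_max_left 1 x, le_max_right 1 x]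
  calc log (1 + x) ≤ log (2 * max 1 x) := log_le_log (by positivity) hmax
    _ = log 2 + log (max 1 x) := log_mul two_ne_zero (by positivity)
    _ ≤ log 2 + x / exp 1 := by
        gcongr
        rcases le_total x 1 with hx1 | hx1
        · rw [max_eq_left hx1, log_one]
          positivity
        · rw [max_eq_right hx1]
          exact log_le_div_exp_one (by linarith)

lemma le_mul_log_of_exp_le_one_add_mul {x B : ℝ} (hx : 0 ≤ x) (hB : 1 ≤ B)
    (h : exp x ≤ 1 + B * x) : x ≤ exp 1 / (exp 1 - 1) * log (2 * B) := by
  have hlog : x ≤ log (2 * B) + x / exp 1 := calc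
    x ≤ log (B * (1 + x)) := (le_log_iff_exp_le (by positivity)).2 (h.trans (by nlinarith))
    _ = log B + log (1 + x) := log_mul (by positivity) (by positivity)
    _ ≤ log B + (log 2 + x / exp 1) := by gcongr; exact log_one_add_le_log_two_add_div_exp_one hx
    _ = log (2 * B) + x / exp 1 := by rw [log_mul two_ne_zero (by positivity)]; ring
  have he : 0 < exp 1 - 1 := sub_pos.2 (one_lt_exp_iff.2 one_pos)
  have hlog_e := mul_le_mul_of_nonneg_right hlog (exp_pos 1).le
  rw [add_mul, div_mul_cancel₀ _ (exp_pos 1).ne'] at hlog_e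
  rw [div_mul_eq_mul_div, le_div_iff₀ he]
  linarith

end Real

open Real

theorem stmt_0_general (k α β : ℝ) (hk : 1 ≤ k) (hα : 0 < α)
    (h : (1 + α) ^ k ≤ 1 + β * k) :
    k ≤ (Real.exp 1 / (Real.exp 1 - 1)) * ((1 + α) / α) * Real.log (2 * β * (1 + α) / α) := by
  obtain ⟨c, hc⟩ : ∃ c, c = α / (1 + α) := ⟨_, rfl⟩
  have hc0 : 0 < c := hc ▸ by positivity
  have hc_log : c ≤ log (1 + α) := by
    convert one_sub_inv_le_log_of_pos (x := 1 + α) (by linarith) using 1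
    rw [hc]
    field_simp
    ring
  have hαβ : α ≤ β := by
    have := (one_add_mul_self_le_rpow_one_add (by linarith) hk).trans h
    nlinarith
  have hB : 1 ≤ β / c :=
    (one_le_div hc0).2 ((hc ▸ div_le_self hα.le (by linarith)).trans hαβ)
  have hexp : exp (c * k) ≤ 1 + β / c * (c * k) := calc
    exp (c * k) ≤ exp (log (1 + α) * k) := by gcongr
    _ = (1 + α) ^ k := (rpow_def_of_pos (by linarith) k).symm
    _ ≤ 1 + β / c * (c * k) := by rwa [← mul_assoc, div_mul_cancel₀ β hc0.ne']
  have hck := le_mul_log_of_exp_le_one_add_mul (by positivity) hB hexp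
  have h_inv : (1 + α) / α = c⁻¹ := by rw [hc, inv_div]
  have h_arg : 2 * β * (1 + α) / α = 2 * (β / c) := by rw [hc]; field_simp
  rwa [h_inv, h_arg, mul_right_comm, ← div_eq_mul_inv, le_div_iff₀' hc0]

theorem stmt_0 (k α β : ℝ) (hk : 1 ≤ k) (hα : 0 < α) (hβ : 0 < β)
    (h : (1 + α) ^ k ≤ 1 + β * k) :
    k ≤ (Real.exp 1 / (Real.exp 1 - 1)) * ((1 + α) / α) * Real.log (2 * β * (1 + α) / α) :=
  stmt_0_general k α β hk hα h
end

section
/- For all α > 0 and k ≥ 1, if β·k < 1 and (1+α)^k ≤ 1 + β·k with β > α > 0, then k ≤ ln(2) · (1+α)/α. -/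
open Real

theorem le_log_mul_one_add_div_of_one_add_rpow_le {k α c : ℝ} (hα : 0 < α) (hc : 1 ≤ c)
    (h : (1 + α) ^ k ≤ c) : k ≤ log c * ((1 + α) / α) := by
  have hα₁ : 0 < 1 + α := by linarith
  have hlog_ge : α / (1 + α) ≤ log (1 + α) := by
    have := one_sub_inv_le_log_of_pos hα₁
    rwa [← one_div, one_sub_div hα₁.ne', add_sub_cancel_left] at this
  have hlog_pos : 0 < log (1 + α) := (div_pos hα hα₁).trans_le hlog_ge
  have hk : k * log (1 + α) ≤ log c := by
    rw [← log_rpow hα₁]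
    exact log_le_log (rpow_pos_of_pos hα₁ k) h
  calc k ≤ log c * (log (1 + α))⁻¹ := by rwa [← div_eq_mul_inv, le_div_iff₀ hlog_pos]
    _ ≤ log c * ((1 + α) / α) := by
      gcongr
      · exact log_nonneg hc
      · rw [← inv_div]
        exact inv_anti₀ (div_pos hα hα₁) hlog_ge

theorem stmt_1_general (k α β : ℝ) (hα : 0 < α) (hβk : β * k < 1)
    (h : (1 + α) ^ k ≤ 1 + β * k) :
    k ≤ Real.log 2 * ((1 + α) / α) :=
  le_log_mul_one_add_div_of_one_add_rpow_le hα one_le_two (by linarith)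

theorem stmt_1 (k α β : ℝ) (hk : 1 ≤ k) (hα : 0 < α) (hαβ : α < β) (hβk : β * k < 1)
    (h : (1 + α) ^ k ≤ 1 + β * k) :
    k ≤ Real.log 2 * ((1 + α) / α) :=
  stmt_1_general k α β hα hβk h
end

section
/- For any function class F ⊆ (X → {1,-1}) and any f* ∈ F, Edim_{f*}(F) ≤ 4^{max(Sdim_{f*}(F), Tdim_{f*}(F))}. -/
/-!
Colour each pair `i < j` of an eluder sequence `(x_i, f_i)` by whether `f_i(x_j) = f*(x_j)`.
Below the diagonal the eluder condition already forces agreement, so a monochromatic clique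
in the first colour is a star sequence and one in the second colour is a threshold sequence.
By Ramsey's theorem in the form `R(a + 1, b + 1) ≤ C(a + b, a)`, an eluder sequence of length at
least `C(2k, k)`, `k = max(s, t)`, contains a star or a threshold subsequence of length `k + 1`;
and `C(2k, k) ≤ 4^k`.
-/

open Finset

namespace SimpleGraph

variable {α : Type*}

theorem exists_isNClique_or_isNClique_compl (G : SimpleGraph α) :
    ∀ (a b : ℕ) (S : Finset α), (a + b).choose a ≤ #S →
      ∃ T ⊆ S, G.IsNClique (a + 1) T ∨ Gᶜ.IsNClique (b + 1) T
  | 0, b, S, hS => by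
    obtain ⟨v, hv⟩ : S.Nonempty := card_pos.1 (by simpa using hS)
    exact ⟨{v}, singleton_subset_iff.2 hv, .inl (isNClique_singleton.2 rfl)⟩
  | a + 1, 0, S, hS => by
    obtain ⟨v, hv⟩ : S.Nonempty := card_pos.1 (by simpa using hS)
    exact ⟨{v}, singleton_subset_iff.2 hv, .inr (isNClique_singleton.2 rfl)⟩
  | a + 1, b + 1, S, hS => by
    classical
    obtain ⟨v, hv⟩ : S.Nonempty := card_pos.1 ((Nat.choose_pos (by omega)).trans_le hS)
    set N := (S.erase v).filter (G.Adj v)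
    set M := (S.erase v).filter (Gᶜ.Adj v)
    have hNM : #N + #M + 1 = #S := by
      have hM : M = (S.erase v).filter (fun w => ¬ G.Adj v w) :=
        filter_congr fun w hw => by simp [compl_adj, ne_of_mem_erase hw |>.symm]
      rw [hM, card_filter_add_card_filter_not, card_erase_add_one hv]
    have cone : ∀ (H : SimpleGraph α) (n : ℕ) (T : Finset α) [DecidablePred (H.Adj v)],
        T ⊆ (S.erase v).filter (H.Adj v) → H.IsNClique n T →
          insert v T ⊆ S ∧ H.IsNClique (n + 1) (insert v T) := fun H n T _ hT hc =>
      ⟨insert_subset hv fun w hw => mem_of_mem_erase (mem_filter.1 (hT hw)).1,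
        hc.insert fun w hw => (mem_filter.1 (hT hw)).2⟩
    have hpascal : (a + 1 + (b + 1)).choose (a + 1) =
        (a + (b + 1)).choose a + (a + 1 + b).choose (a + 1) := by
      rw [show a + 1 + (b + 1) = a + (b + 1) + 1 by omega, Nat.choose_succ_succ',
        show a + (b + 1) = a + 1 + b by omega]
    by_cases hN : (a + (b + 1)).choose a ≤ #N
    · obtain ⟨T, hTN, hT | hT⟩ := exists_isNClique_or_isNClique_compl G a (b + 1) N hN
      · obtain ⟨hsub, hc⟩ := cone G _ T hTN hT
        exact ⟨insert v T, hsub, .inl hc⟩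
      · exact ⟨T, hTN.trans ((filter_subset _ _).trans (erase_subset _ _)), .inr hT⟩
    · obtain ⟨T, hTM, hT | hT⟩ :=
        exists_isNClique_or_isNClique_compl G (a + 1) b M (by omega)
      · exact ⟨T, hTM.trans ((filter_subset _ _).trans (erase_subset _ _)), .inl hT⟩
      · obtain ⟨hsub, hc⟩ := cone Gᶜ _ T hTM hT
        exact ⟨insert v T, hsub, .inr hc⟩
termination_by a b => a + b

end SimpleGraph

section Eluder

variable {X Y : Type*} {m : ℕ} (fstar : X → Y) (x : Fin m → X) (f : Fin m → X → Y)

def IsEluderSeq : Prop :=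
  (∀ i, f i (x i) ≠ fstar (x i)) ∧ ∀ i j, j < i → f i (x j) = fstar (x j)

def IsStarSeq : Prop :=
  (∀ i, f i (x i) ≠ fstar (x i)) ∧ ∀ i j, j ≠ i → f i (x j) = fstar (x j)

def IsThresholdSeq : Prop :=
  (∀ i k, i ≤ k → f i (x k) ≠ fstar (x k)) ∧ ∀ i j, j < i → f i (x j) = fstar (x j)

def agreementGraph : SimpleGraph (Fin m) :=
  SimpleGraph.fromRel fun i j => i < j ∧ f i (x j) = fstar (x j)

variable {fstar x f}

theorem agreementGraph_adj_of_lt {i j : Fin m} (hij : i < j) :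
    (agreementGraph fstar x f).Adj i j ↔ f i (x j) = fstar (x j) := by
  simp [agreementGraph, hij, hij.ne, hij.not_gt]

namespace IsEluderSeq

variable {n : ℕ} {T : Finset (Fin m)}

theorem isStarSeq_of_isNClique (h : IsEluderSeq fstar x f)
    (hT : (agreementGraph fstar x f).IsNClique n T) :
    IsStarSeq fstar (x ∘ T.orderEmbOfFin hT.card_eq) (f ∘ T.orderEmbOfFin hT.card_eq) := by
  set e := T.orderEmbOfFin hT.card_eq
  refine ⟨fun i => h.1 (e i), fun i j hji => ?_⟩
  rcases hji.lt_or_gt with hji | hij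
  · exact h.2 _ _ (e.strictMono hji)
  · have hmem : ∀ k, e k ∈ T := fun k => T.orderEmbOfFin_mem hT.card_eq k
    exact (agreementGraph_adj_of_lt (e.strictMono hij)).1
      (hT.isClique (hmem i) (hmem j) (e.injective.ne hij.ne))

theorem isThresholdSeq_of_isNClique_compl (h : IsEluderSeq fstar x f)
    (hT : (agreementGraph fstar x f)ᶜ.IsNClique n T) :
    IsThresholdSeq fstar (x ∘ T.orderEmbOfFin hT.card_eq)
      (f ∘ T.orderEmbOfFin hT.card_eq) := by
  set e := T.orderEmbOfFin hT.card_eq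
  refine ⟨fun i k hik => ?_, fun i j hji => h.2 _ _ (e.strictMono hji)⟩
  rcases hik.eq_or_lt with rfl | hik
  · exact h.1 (e i)
  · have hmem : ∀ k, e k ∈ T := fun k => T.orderEmbOfFin_mem hT.card_eq k
    exact mt (agreementGraph_adj_of_lt (e.strictMono hik)).2
      (hT.isClique (hmem i) (hmem k) (e.injective.ne hik.ne)).2

theorem exists_isStarSeq_or_isThresholdSeq (h : IsEluderSeq fstar x f) (a b : ℕ)
    (hm : (a + b).choose a ≤ m) :
    (∃ e : Fin (a + 1) ↪o Fin m, IsStarSeq fstar (x ∘ e) (f ∘ e)) ∨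
      ∃ e : Fin (b + 1) ↪o Fin m, IsThresholdSeq fstar (x ∘ e) (f ∘ e) := by
  obtain ⟨T, -, hT | hT⟩ := (agreementGraph fstar x f).exists_isNClique_or_isNClique_compl
    a b univ (by simpa using hm)
  · exact .inl ⟨_, h.isStarSeq_of_isNClique hT⟩
  · exact .inr ⟨_, h.isThresholdSeq_of_isNClique_compl hT⟩

end IsEluderSeq

end Eluder

theorem stmt_11_general {X : Type*} (F : Set (X → ℤ))
    (fstar : X → ℤ) (s t : ℕ)
    (hs : ∀ (m : ℕ) (x : Fin m → X) (f : Fin m → X → ℤ),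
      (∀ i, f i ∈ F) →
      (∀ i : Fin m, f i (x i) ≠ fstar (x i)) →
      (∀ i j : Fin m, j ≠ i → f i (x j) = fstar (x j)) → m ≤ s)
    (ht : ∀ (m : ℕ) (x : Fin m → X) (f : Fin m → X → ℤ),
      (∀ i, f i ∈ F) →
      (∀ i k : Fin m, i ≤ k → f i (x k) ≠ fstar (x k)) →
      (∀ i j : Fin m, j < i → f i (x j) = fstar (x j)) → m ≤ t) :
    ∀ (m : ℕ) (x : Fin m → X) (f : Fin m → X → ℤ),
      (∀ i, f i ∈ F) →
      (∀ i : Fin m, f i (x i) ≠ fstar (x i)) →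
      (∀ i j : Fin m, j < i → f i (x j) = fstar (x j)) →
      m ≤ 4 ^ max s t := by
  intro m x f hmem hne helu
  by_contra! hm
  have hchoose : (max s t + max s t).choose (max s t) ≤ m := by
    rw [← two_mul, ← Nat.centralBinom_eq_two_mul_choose]
    exact (Nat.centralBinom_le_four_pow _).trans hm.le
  obtain ⟨e, he⟩ | ⟨e, he⟩ :=
    IsEluderSeq.exists_isStarSeq_or_isThresholdSeq ⟨hne, helu⟩ _ _ hchoose
  · have := hs _ _ _ (fun i => hmem (e i)) he.1 he.2
    omega
  · have := ht _ _ _ (fun i => hmem (e i)) he.1 he.2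
    omega

/-- `Edim_{f*}(F) ≤ 4^{max(Sdim_{f*}(F), Tdim_{f*}(F))}`, stated via upper bounds:
if `s` bounds the length of every star witnessing sequence and `t` bounds the length of
every threshold witnessing sequence (in particular one may take `s = Sdim_{f*}(F)` and
`t = Tdim_{f*}(F)`), then every eluder witnessing sequence has length at most
`4 ^ max s t`. -/
theorem stmt_11 {X : Type*} (F : Set (X → ℤ))
    (hsign : ∀ f ∈ F, ∀ x, f x = 1 ∨ f x = -1)
    (fstar : X → ℤ) (hfstar : fstar ∈ F) (s t : ℕ)
    (hs : ∀ (m : ℕ) (x : Fin m → X) (f : Fin m → X → ℤ),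
      (∀ i, f i ∈ F) →
      (∀ i : Fin m, f i (x i) ≠ fstar (x i)) →
      (∀ i j : Fin m, j ≠ i → f i (x j) = fstar (x j)) → m ≤ s)
    (ht : ∀ (m : ℕ) (x : Fin m → X) (f : Fin m → X → ℤ),
      (∀ i, f i ∈ F) →
      (∀ i k : Fin m, i ≤ k → f i (x k) ≠ fstar (x k)) →
      (∀ i j : Fin m, j < i → f i (x j) = fstar (x j)) → m ≤ t) :
    ∀ (m : ℕ) (x : Fin m → X) (f : Fin m → X → ℤ),
      (∀ i, f i ∈ F) →
      (∀ i : Fin m, f i (x i) ≠ fstar (x i)) →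
      (∀ i j : Fin m, j < i → f i (x j) = fstar (x j)) →
      m ≤ 4 ^ max s t :=
  stmt_11_general F fstar s t hs ht
end

section
/- Let (x_1,f_1),...,(x_m,f_m) be an eluder witnessing sequence with respect to f* (i.e., f_i(x_i) ≠ f*(x_i) and f_i(x_j) = f*(x_j) for all j < i, for sign-valued functions). Color the edge {i,j} of K_m (for j < i) red if f_j(x_i) = f*(x_i) and blue otherwise. Then every red clique {i_1 < ... < i_k} yields a subsequence (x_{i_1},f_{i_1}),...,(x_{i_k},f_{i_k}) witnessing the star number condition (f_{i_r}(x_{i_r}) ≠ f*(x_{i_r}) and f_{i_r}(x_{i_s}) = f*(x_{i_s}) for all s ≠ r), and every blue clique yields a subsequence witnessing the threshold condition (f_{i_r}(x_{i_s}) ≠ f*(x_{i_s}) for s ≥ r and f_{i_r}(x_{i_s}) = f*(x_{i_s}) for s < r). -/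
/-! Along a red clique each `f_{i_r}` agrees with `f*` at later points by redness and at earlier
points by the eluder property, so only the diagonal disagrees: a star. Along a blue clique it
disagrees at later points by blueness and on the diagonal, and agrees at earlier points by the
eluder property: a threshold. -/

def IsEluderSequence {ι X Y : Type*} [LT ι] (fstar : X → Y) (x : ι → X) (f : ι → X → Y) :
    Prop :=
  ∀ i, f i (x i) ≠ fstar (x i) ∧ ∀ j, j < i → f i (x j) = fstar (x j)

namespace IsEluderSequence

variable {κ ι X Y : Type*} [LinearOrder κ] [Preorder ι] {fstar : X → Y} {x : ι → X}
  {f : ι → X → Y} {σ : κ → ι}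

theorem star_of_red_clique (h : IsEluderSequence fstar x f) (hσ : StrictMono σ)
    (hred : ∀ r s, r < s → f (σ r) (x (σ s)) = fstar (x (σ s))) (r : κ) :
    f (σ r) (x (σ r)) ≠ fstar (x (σ r)) ∧
      ∀ s, s ≠ r → f (σ r) (x (σ s)) = fstar (x (σ s)) := by
  refine ⟨(h (σ r)).1, fun s hsr => ?_⟩
  rcases hsr.lt_or_gt with hlt | hgt
  · exact (h (σ r)).2 _ (hσ hlt)
  · exact hred r s hgt

theorem threshold_of_blue_clique (h : IsEluderSequence fstar x f) (hσ : StrictMono σ)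
    (hblue : ∀ r s, r < s → f (σ r) (x (σ s)) ≠ fstar (x (σ s))) (r : κ) :
    (∀ s, r ≤ s → f (σ r) (x (σ s)) ≠ fstar (x (σ s))) ∧
      ∀ s, s < r → f (σ r) (x (σ s)) = fstar (x (σ s)) := by
  refine ⟨fun s hrs => ?_, fun s hsr => (h (σ r)).2 _ (hσ hsr)⟩
  rcases hrs.eq_or_lt with rfl | hlt
  · exact (h (σ r)).1
  · exact hblue r s hlt

end IsEluderSequence

theorem stmt_12_general {X : Type*} (fstar : X → ℤ) (m : ℕ)
    (x : Fin m → X) (f : Fin m → X → ℤ)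
    (heluder : ∀ i : Fin m, f i (x i) ≠ fstar (x i) ∧
      ∀ j : Fin m, j < i → f i (x j) = fstar (x j))
    (k : ℕ) (ι : Fin k → Fin m) (hι : StrictMono ι) :
    ((∀ r s : Fin k, r < s → f (ι r) (x (ι s)) = fstar (x (ι s))) →
      ∀ r : Fin k, f (ι r) (x (ι r)) ≠ fstar (x (ι r)) ∧
        ∀ s : Fin k, s ≠ r → f (ι r) (x (ι s)) = fstar (x (ι s))) ∧
    ((∀ r s : Fin k, r < s → f (ι r) (x (ι s)) ≠ fstar (x (ι s))) →
      ∀ r : Fin k,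
        (∀ s : Fin k, r ≤ s → f (ι r) (x (ι s)) ≠ fstar (x (ι s))) ∧
        ∀ s : Fin k, s < r → f (ι r) (x (ι s)) = fstar (x (ι s))) :=
  ⟨IsEluderSequence.star_of_red_clique heluder hι,
    IsEluderSequence.threshold_of_blue_clique heluder hι⟩

/-- The combinatorial core of the Ramsey argument: coloring edge `{j, i}` (`j < i`) of
`K_m` red if `f j (x i) = f* (x i)` and blue otherwise, every red clique of an eluder
witnessing sequence yields a star witnessing subsequence, and every blue clique yields
a threshold witnessing subsequence. -/
theorem stmt_12 {X : Type*} (fstar : X → ℤ) (m : ℕ)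
    (x : Fin m → X) (f : Fin m → X → ℤ)
    (hsign : ∀ i : Fin m, ∀ y, f i y = 1 ∨ f i y = -1)
    (hsignstar : ∀ y, fstar y = 1 ∨ fstar y = -1)
    (heluder : ∀ i : Fin m, f i (x i) ≠ fstar (x i) ∧
      ∀ j : Fin m, j < i → f i (x j) = fstar (x j))
    (k : ℕ) (ι : Fin k → Fin m) (hι : StrictMono ι) :
    ((∀ r s : Fin k, r < s → f (ι r) (x (ι s)) = fstar (x (ι s))) →
      ∀ r : Fin k, f (ι r) (x (ι r)) ≠ fstar (x (ι r)) ∧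
        ∀ s : Fin k, s ≠ r → f (ι r) (x (ι s)) = fstar (x (ι s))) ∧
    ((∀ r s : Fin k, r < s → f (ι r) (x (ι s)) ≠ fstar (x (ι s))) →
      ∀ r : Fin k,
        (∀ s : Fin k, r ≤ s → f (ι r) (x (ι s)) ≠ fstar (x (ι s))) ∧
        ∀ s : Fin k, s < r → f (ι r) (x (ι s)) = fstar (x (ι s))) :=
  stmt_12_general fstar m x f heluder k ι hι
end

section
/- For any function class F ⊆ (X → {1,-1}), the threshold dimension over all base functions satisfies Tdim(F) ≤ 2·Tdim_1(F), where Tdim_1 is the threshold dimension with respect to the constant function 1 and Tdim(F) = sup over f* ∈ F of Tdim_{f*}(F). -/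
/-!
Split a threshold sequence against `f*` according to the sign of `f*` at its points. Along the
points where `f* = 1` it is already a threshold sequence against the constant `1`. Along the
points where `f* = -1`, read the sequence backwards: the function that used to come just after
a point now comes just before it, and `f*` itself opens the sequence; since all functions are
`±1`-valued, "differs from `f* = -1`" becomes "equals `1`" and vice versa.
-/

/-- `(x, f)` is a threshold witnessing sequence for `F` w.r.t. base function `g`. -/
def ThreshSeq {X : Type*} (F : Set (X → ℤ)) (g : X → ℤ) {m : ℕ}
    (x : Fin m → X) (f : Fin m → X → ℤ) : Prop :=
  (∀ i, f i ∈ F) ∧ ∀ i : Fin m,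
    (∀ k : Fin m, i ≤ k → f i (x k) ≠ g (x k)) ∧ ∀ j : Fin m, j < i → f i (x j) = g (x j)

namespace ThreshSeq

variable {X : Type*} {F : Set (X → ℤ)} {g g' : X → ℤ} {m : ℕ} {x : Fin m → X}
  {f : Fin m → X → ℤ}

theorem comp {n : ℕ} (h : ThreshSeq F g x f) {e : Fin n → Fin m} (he : StrictMono e) :
    ThreshSeq F g (x ∘ e) (f ∘ e) :=
  ⟨fun i => h.1 (e i), fun i =>
    ⟨fun k hik => (h.2 (e i)).1 (e k) (he.monotone hik),
      fun j hji => (h.2 (e i)).2 (e j) (he hji)⟩⟩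

theorem of_base_eq (h : ThreshSeq F g x f) (hg : ∀ k, g (x k) = g' (x k)) :
    ThreshSeq F g' x f :=
  ⟨h.1, fun i =>
    ⟨fun k hik => hg k ▸ (h.2 i).1 k hik, fun j hji => hg j ▸ (h.2 i).2 j hji⟩⟩

/-- The `k`-th function of the new sequence is the `(n - k)`-th of the old one, and `g` is the
`0`-th. -/
theorem rev_cons (hsign : ∀ f ∈ F, ∀ x, f x = 1 ∨ f x = -1) {n : ℕ} {x : Fin (n + 1) → X}
    {f : Fin (n + 1) → X → ℤ} (h : ThreshSeq F g x f) (hgF : g ∈ F)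
    (hg : ∀ k, g (x k) = -1) :
    ThreshSeq F (fun _ => 1) (x ∘ Fin.rev) (Fin.cons g fun i => f i.castSucc.rev) := by
  refine ⟨Fin.cases hgF fun i => h.1 _, Fin.cases ⟨fun k _ => ?_, fun j hj => ?_⟩ fun i => ?_⟩
  · simp [hg]
  · exact absurd hj (Fin.not_lt_zero j)
  refine ⟨fun k hik => ?_, fun j hji => ?_⟩
  · have hlt : k.rev < i.castSucc.rev := Fin.rev_lt_rev.2 (Fin.castSucc_lt_iff_succ_le.2 hik)
    simp [(h.2 _).2 _ hlt, hg]
  · have hle : i.castSucc.rev ≤ j.rev := Fin.rev_le_rev.2 (Fin.le_castSucc_iff.2 hji)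
    have hne := (h.2 _).1 _ hle
    rw [hg] at hne
    exact (hsign _ (h.1 _) _).resolve_right hne

theorem exists_of_base_eq_neg_one (hsign : ∀ f ∈ F, ∀ x, f x = 1 ∨ f x = -1)
    (h : ThreshSeq F g x f) (hgF : g ∈ F) (hg : ∀ k, g (x k) = -1) :
    ∃ (y : Fin m → X) (f' : Fin m → X → ℤ), ThreshSeq F (fun _ => 1) y f' := by
  cases m with
  | zero => exact ⟨Fin.elim0, Fin.elim0, fun i => i.elim0, fun i => i.elim0⟩
  | succ n => exact ⟨_, _, h.rev_cons hsign hgF hg⟩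

end ThreshSeq

/-- `Tdim(F) ≤ 2 · Tdim_1(F)`: if `t₁` bounds the length of every threshold witnessing
sequence against the constant-`1` base function, then for every `f* ∈ F`, every
threshold witnessing sequence against `f*` has length at most `2 · t₁`. -/
theorem stmt_14 {X : Type*} (F : Set (X → ℤ))
    (hsign : ∀ f ∈ F, ∀ x, f x = 1 ∨ f x = -1) (t₁ : ℕ)
    (ht₁ : ∀ (m : ℕ) (x : Fin m → X) (f : Fin m → X → ℤ),
      ThreshSeq F (fun _ => 1) x f → m ≤ t₁) :
    ∀ fstar ∈ F, ∀ (m : ℕ) (x : Fin m → X) (f : Fin m → X → ℤ),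
      ThreshSeq F fstar x f → m ≤ 2 * t₁ := by
  intro fstar hfstar m x f h
  let pos := Finset.univ.filter fun i => fstar (x i) = 1
  let neg := Finset.univ.filter fun i => fstar (x i) ≠ 1
  have hcard : pos.card + neg.card = m := by
    simpa using Finset.card_filter_add_card_filter_not (s := Finset.univ) fun i => fstar (x i) = 1
  have hpos : pos.card ≤ t₁ := by
    let e := pos.orderEmbOfFin rfl
    exact ht₁ _ _ _ ((h.comp e.strictMono).of_base_eq fun k =>
      (Finset.mem_filter.1 (pos.orderEmbOfFin_mem rfl k)).2)
  have hneg : neg.card ≤ t₁ := by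
    let e := neg.orderEmbOfFin rfl
    have hval : ∀ k, fstar (x (e k)) = -1 := fun k =>
      (hsign _ hfstar _).resolve_left (Finset.mem_filter.1 (neg.orderEmbOfFin_mem rfl k)).2
    obtain ⟨y, f', h'⟩ := (h.comp e.strictMono).exists_of_base_eq_neg_one hsign hfstar hval
    exact ht₁ _ y f' h'
  omega
end

section
/- Let B be a random N×(N+1) sign matrix with B_{ij} = 1 for i < j, B_{ij} = -1 for i = j, and B_{ij} uniform in {1,-1} independently for i > j. For fixed k-length sequences I = (i_1,...,i_k), J = (j_1,...,j_k) of distinct indices, the probability that the submatrix (B_{i_r, j_s})_{r,s} satisfies B_{i_r, j_r} = -1 for all r and B_{i_r, j_s} = 1 for all r ≠ s (a valid star pattern w.r.t. base value 1) is at most 2^{-k(k-1)/2}. -/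
/-!
A valid star pattern forces `J r ≤ I r` (a diagonal `-1` cannot lie above the diagonal of `B`) and
`I r ≠ J s` for `r ≠ s` (an off-diagonal `+1` cannot lie on it). Hence for every pair `r ≠ s` one
of the positions `(I r, J s)`, `(I s, J r)` lies strictly below the diagonal, where the pattern
forces the random sign to be `+1`. These are at least `k(k-1)/2` distinct random entries, each
fixed by the pattern.
-/

/-- The random sign matrix: `+1` above the diagonal, `-1` on the diagonal, and
a random sign (encoded by `g`) strictly below the diagonal. -/
def Bmat (N : ℕ) (g : Fin N × Fin (N + 1) → Bool) (i : Fin N) (j : Fin (N + 1)) : ℤ :=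
  if (i : ℕ) < (j : ℕ) then 1
  else if (i : ℕ) = (j : ℕ) then -1
  else if g (i, j) then 1 else -1

open Finset

theorem card_mul_pow_le_card_fun_of_eqOn {α β : Type*} [Fintype α] [DecidableEq α] [Fintype β]
    (S : Finset α) (c : α → β) (P : (α → β) → Prop) (hP : ∀ g, P g → ∀ x ∈ S, g x = c x) :
    Nat.card {g // P g} * Fintype.card β ^ #S ≤ Nat.card (α → β) := by
  let Φ : {g // P g} × (S → β) → α → β :=
    fun p x => if hx : x ∈ S then p.2 ⟨x, hx⟩ else p.1.1 x
  have hΦ : Function.Injective Φ := by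
    rintro ⟨⟨g, hg⟩, h⟩ ⟨⟨g', hg'⟩, h'⟩ heq
    have hh : h = h' := funext fun ⟨x, hx⟩ => by simpa [Φ, hx] using congrFun heq x
    have hgg : g = g' := funext fun x => by
      by_cases hx : x ∈ S
      · rw [hP g hg x hx, hP g' hg' x hx]
      · simpa [Φ, hx] using congrFun heq x
    subst hh hgg
    rfl
  simpa [Nat.card_prod, Nat.card_fun] using Nat.card_le_card_of_injective Φ hΦ

theorem choose_two_le_card_filter_of_total {ι : Type*} [Fintype ι] [DecidableEq ι]
    (R : ι → ι → Prop) [DecidableRel R] (hR : ∀ r s, r ≠ s → R r s ∨ R s r) :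
    (Fintype.card ι).choose 2 ≤ #{p : ι × ι | p.1 ≠ p.2 ∧ R p.1 p.2} := by
  set T : Finset (ι × ι) := {p | p.1 ≠ p.2 ∧ R p.1 p.2}
  have hcover : (univ : Finset ι).offDiag ⊆ T ∪ T.image Prod.swap := by
    rintro ⟨r, s⟩ hrs
    replace hrs : r ≠ s := by simpa using hrs
    rcases hR r s hrs with h | h
    · simp [T, hrs, h]
    · exact mem_union_right _ (mem_image.mpr ⟨(s, r), by simp [T, hrs.symm, h], rfl⟩)
  have hoffDiag : #(univ : Finset ι).offDiag ≤ 2 * #T :=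
    calc #(univ : Finset ι).offDiag ≤ #(T ∪ T.image Prod.swap) := card_le_card hcover
      _ ≤ #T + #(T.image Prod.swap) := card_union_le _ _
      _ ≤ 2 * #T := by linarith [card_image_le (s := T) (f := Prod.swap)]
  rw [offDiag_card, card_univ, ← Nat.mul_sub_one] at hoffDiag
  rw [Nat.choose_two_right]
  exact Nat.div_le_of_le_mul hoffDiag

section Bmat

variable {N : ℕ} {g : Fin N × Fin (N + 1) → Bool} {i : Fin N} {j : Fin (N + 1)}

theorem le_of_Bmat_eq_neg_one (h : Bmat N g i j = -1) : (j : ℕ) ≤ i := by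
  by_contra hlt
  simp [Bmat, not_le.mp hlt] at h

theorem ne_of_Bmat_eq_one (h : Bmat N g i j = 1) : (i : ℕ) ≠ j := by
  intro heq
  simp [Bmat, heq] at h

theorem apply_eq_true_of_Bmat_eq_one (hji : (j : ℕ) < i) (h : Bmat N g i j = 1) :
    g (i, j) = true := by
  simpa [Bmat, hji.not_gt, hji.ne'] using h

end Bmat

def IsStarPattern (N : ℕ) {k : ℕ} (I : Fin k → Fin N) (J : Fin k → Fin (N + 1))
    (g : Fin N × Fin (N + 1) → Bool) : Prop :=
  (∀ r : Fin k, Bmat N g (I r) (J r) = -1) ∧ ∀ r s : Fin k, r ≠ s → Bmat N g (I r) (J s) = 1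

theorem IsStarPattern.lt_or_lt {N k : ℕ} {I : Fin k → Fin N} {J : Fin k → Fin (N + 1)}
    {g : Fin N × Fin (N + 1) → Bool} (hg : IsStarPattern N I J g) {r s : Fin k} (hrs : r ≠ s) :
    (J s : ℕ) < I r ∨ (J r : ℕ) < I s := by
  have := le_of_Bmat_eq_neg_one (hg.1 r)
  have := le_of_Bmat_eq_neg_one (hg.1 s)
  have := ne_of_Bmat_eq_one (hg.2 r s hrs)
  omega

/-- For fixed sequences of distinct row indices `I` and column indices `J`, the
probability (under uniformly random below-diagonal signs) that the submatrix
`(B_{I r, J s})` is a valid star pattern w.r.t. base value `1` (i.e. `-1` on its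
diagonal and `+1` off the diagonal) is at most `2 ^ (-k(k-1)/2)`. -/
theorem stmt_15 (N k : ℕ) (I : Fin k → Fin N) (J : Fin k → Fin (N + 1))
    (hI : Function.Injective I) (hJ : Function.Injective J) :
    Nat.card {g : Fin N × Fin (N + 1) → Bool //
        (∀ r : Fin k, Bmat N g (I r) (J r) = -1) ∧
        ∀ r s : Fin k, r ≠ s → Bmat N g (I r) (J s) = 1} * 2 ^ (k * (k - 1) / 2)
      ≤ Nat.card (Fin N × Fin (N + 1) → Bool) := by
  change Nat.card {g // IsStarPattern N I J g} * _ ≤ _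
  rcases isEmpty_or_nonempty {g // IsStarPattern N I J g} with hempty | ⟨g₀, hg₀⟩
  · simp
  set T : Finset (Fin k × Fin k) := {p | p.1 ≠ p.2 ∧ (J p.2 : ℕ) < I p.1}
  set S := T.image (Prod.map I J)
  have hS : #S = #T := card_image_of_injective _ (hI.prodMap hJ)
  have hT : k * (k - 1) / 2 ≤ #T := by
    simpa [Nat.choose_two_right] using
      choose_two_le_card_filter_of_total _ fun r s hrs => hg₀.lt_or_lt hrs
  have hforced : ∀ g, IsStarPattern N I J g → ∀ x ∈ S, g x = true := by
    rintro g hg _ hx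
    obtain ⟨⟨r, s⟩, hrs, rfl⟩ := mem_image.mp hx
    obtain ⟨hne, hlt⟩ := (mem_filter.mp hrs).2
    exact apply_eq_true_of_Bmat_eq_one hlt (hg.2 r s hne)
  calc _ ≤ Nat.card {g // IsStarPattern N I J g} * 2 ^ #S := by
        rw [hS]; exact Nat.mul_le_mul_left _ (Nat.pow_le_pow_right two_pos hT)
    _ ≤ _ := card_mul_pow_le_card_fun_of_eqOn S (fun _ => true) _ hforced
end

section
/- Let V_{i+1} = V_i + φ_i φ_i^T with V_1 = λ·I for λ > 0, where φ_1,...,φ_m ∈ R^d satisfy ‖φ_i‖_{V_i^{-1}}^2 > 1/2 for all i, and ‖φ_i‖ ≤ R_φ. Then (3/2)^{m/d} ≤ 1 + (m/d)·(R_φ²/λ). -/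
/-!
Each rank-one update `V ↦ V + φφᵀ` multiplies the determinant by `1 + ‖φ‖²_{V⁻¹} > 3/2`
(matrix determinant lemma), so `λ^d (3/2)^m ≤ det V_m`. On the other hand AM-GM on the
eigenvalues gives `det V_m ≤ (tr V_m / d)^d`, and each update raises the trace by at most `R_φ²`,
so `det V_m ≤ (λ + m R_φ² / d)^d`. Taking `d`-th roots gives the claim.
-/

open Matrix Finset

theorem Real.prod_le_sum_div_card_pow {ι : Type*} (s : Finset ι) {z : ι → ℝ}
    (hz : ∀ i ∈ s, 0 ≤ z i) : ∏ i ∈ s, z i ≤ ((∑ i ∈ s, z i) / #s) ^ #s := by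
  rcases s.eq_empty_or_nonempty with rfl | hs
  · simp
  have hcard : (0 : ℝ) < #s := by exact_mod_cast hs.card_pos
  have amgm := Real.geom_mean_le_arith_mean_weighted s (fun _ ↦ (#s : ℝ)⁻¹) z
    (fun _ _ ↦ by positivity) (by simp [hcard.ne']) hz
  rw [Real.finsetProd_rpow s z hz, ← mul_sum, inv_mul_eq_div] at amgm
  calc ∏ i ∈ s, z i = ((∏ i ∈ s, z i) ^ (#s : ℝ)⁻¹) ^ #s :=
        (Real.rpow_inv_natCast_pow (prod_nonneg hz) hs.card_pos.ne').symm
    _ ≤ ((∑ i ∈ s, z i) / #s) ^ #s :=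
        pow_le_pow_left₀ (Real.rpow_nonneg (prod_nonneg hz) _) amgm _

theorem Real.rpow_div_le_of_pow_le {a b : ℝ} {m d : ℕ} (ha : 0 ≤ a) (hb : 0 ≤ b) (hd : d ≠ 0)
    (h : a ^ m ≤ b ^ d) : a ^ ((m : ℝ) / d) ≤ b := by
  calc a ^ ((m : ℝ) / d) = (a ^ m) ^ (d : ℝ)⁻¹ := by
        rw [div_eq_mul_inv, Real.rpow_mul ha, Real.rpow_natCast]
    _ ≤ (b ^ d) ^ (d : ℝ)⁻¹ := by gcongr
    _ = b := Real.pow_rpow_inv_natCast hb hd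

namespace Matrix

variable {n : Type*} [Fintype n]

theorem det_add_vecMulVec [DecidableEq n] {R : Type*} [CommRing R] {A : Matrix n n R}
    (hA : IsUnit A.det) (u v : n → R) :
    (A + vecMulVec u v).det = A.det * (1 + v ⬝ᵥ (A⁻¹ *ᵥ u)) := by
  have hfactor : A + vecMulVec u v = A * (1 + vecMulVec (A⁻¹ *ᵥ u) v) := by
    rw [Matrix.mul_add, Matrix.mul_one, vecMulVec_eq Unit, vecMulVec_eq Unit, ← Matrix.mul_assoc,
      replicateCol_mulVec, ← Matrix.mul_assoc, mul_nonsing_inv _ hA, Matrix.one_mul]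
  rw [hfactor, det_mul, vecMulVec_eq Unit, det_one_add_replicateCol_mul_replicateRow]

theorem PosSemidef.det_le_trace_div_card_pow [DecidableEq n] {A : Matrix n n ℝ}
    (hA : A.PosSemidef) : A.det ≤ (A.trace / Fintype.card n) ^ Fintype.card n := by
  have hdet : A.det = ∏ i, hA.isHermitian.eigenvalues i := by
    simpa using hA.isHermitian.det_eq_prod_eigenvalues
  have htrace : A.trace = ∑ i, hA.isHermitian.eigenvalues i := by
    simpa using hA.isHermitian.trace_eq_sum_eigenvalues
  rw [hdet, htrace]
  exact Real.prod_le_sum_div_card_pow univ fun i _ ↦ hA.eigenvalues_nonneg i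

section RankOneUpdates

variable {V : ℕ → Matrix n n ℝ} {φ : ℕ → n → ℝ} {m : ℕ}

theorem posDef_of_rankOne_updates (h0 : (V 0).PosDef)
    (hV : ∀ i < m, V (i + 1) = V i + vecMulVec (φ i) (φ i)) {i : ℕ} (hi : i ≤ m) :
    (V i).PosDef := by
  induction i with
  | zero => exact h0
  | succ k ih =>
    rw [hV k hi]
    simpa using (ih (by omega)).add_posSemidef (posSemidef_vecMulVec_self_star (φ k))

theorem pow_mul_det_le_det_of_rankOne_updates [DecidableEq n] (h0 : (V 0).PosDef)
    (hV : ∀ i < m, V (i + 1) = V i + vecMulVec (φ i) (φ i)) {c : ℝ} (hc : 0 ≤ c)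
    (hφ : ∀ i < m, c ≤ φ i ⬝ᵥ ((V i)⁻¹ *ᵥ φ i)) {i : ℕ} (hi : i ≤ m) :
    (1 + c) ^ i * (V 0).det ≤ (V i).det := by
  induction i with
  | zero => simp
  | succ k ih =>
    have hVk := posDef_of_rankOne_updates h0 hV (i := k) (by omega)
    rw [hV k hi, det_add_vecMulVec hVk.det_pos.ne'.isUnit, pow_succ, mul_right_comm]
    gcongr
    · exact hVk.det_pos.le
    · exact ih (by omega)
    · exact hφ k hi

theorem trace_le_of_rankOne_updates (hV : ∀ i < m, V (i + 1) = V i + vecMulVec (φ i) (φ i))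
    {B : ℝ} (hφ : ∀ i < m, φ i ⬝ᵥ φ i ≤ B) {i : ℕ} (hi : i ≤ m) :
    (V i).trace ≤ (V 0).trace + i * B := by
  induction i with
  | zero => simp
  | succ k ih =>
    rw [hV k hi, trace_add, trace_vecMulVec]
    push_cast
    linarith [ih (by omega), hφ k hi]

end RankOneUpdates

end Matrix

/-- The elliptic potential argument: if `V_{i+1} = V_i + φ_i φ_iᵀ` with `V_0 = λ I`,
`‖φ_i‖²_{V_i⁻¹} > 1/2` and `‖φ_i‖ ≤ R_φ` for all `i < m`, then
`(3/2)^{m/d} ≤ 1 + (m/d)·(R_φ²/λ)`. -/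
theorem stmt_19 (d m : ℕ) (hd : 0 < d) (lam Rphi : ℝ) (hlam : 0 < lam)
    (φ : ℕ → Fin d → ℝ) (V : ℕ → Matrix (Fin d) (Fin d) ℝ)
    (hV0 : V 0 = lam • (1 : Matrix (Fin d) (Fin d) ℝ))
    (hVs : ∀ i < m, V (i + 1) = V i + Matrix.vecMulVec (φ i) (φ i))
    (hip : ∀ i < m, 1 / 2 < φ i ⬝ᵥ ((V i)⁻¹ *ᵥ φ i))
    (hnorm : ∀ i < m, φ i ⬝ᵥ φ i ≤ Rphi ^ 2) :
    ((3 : ℝ) / 2) ^ ((m : ℝ) / (d : ℝ)) ≤ 1 + ((m : ℝ) / (d : ℝ)) * (Rphi ^ 2 / lam) := by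
  have hV0pos : (V 0).PosDef := hV0 ▸ PosDef.one.smul hlam
  have hdet_lower : (3 / 2) ^ m * lam ^ d ≤ (V m).det := by
    have h := pow_mul_det_le_det_of_rankOne_updates hV0pos hVs (by norm_num)
      (fun i hi ↦ (hip i hi).le) le_rfl
    rw [hV0, det_smul, det_one, Fintype.card_fin, mul_one] at h
    convert h using 2
    norm_num
  have htrace_upper : (V m).trace ≤ lam * d + m * Rphi ^ 2 := by
    simpa [hV0] using trace_le_of_rankOne_updates hVs hnorm le_rfl
  have hVm := (posDef_of_rankOne_updates hV0pos hVs le_rfl).posSemidef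
  have hdet_upper : (V m).det ≤ lam ^ d * (1 + (m / d) * (Rphi ^ 2 / lam)) ^ d :=
    calc (V m).det ≤ ((V m).trace / d) ^ d := by simpa using hVm.det_le_trace_div_card_pow
      _ ≤ ((lam * d + m * Rphi ^ 2) / d) ^ d := 
        pow_le_pow_left₀ (div_nonneg hVm.trace_nonneg d.cast_nonneg) (by gcongr) d
      _ = lam ^ d * (1 + (m / d) * (Rphi ^ 2 / lam)) ^ d := by
        rw [← mul_pow]
        field_simp
  have hpow : ((3 : ℝ) / 2) ^ m ≤ (1 + (m / d) * (Rphi ^ 2 / lam)) ^ d :=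
    le_of_mul_le_mul_right (by linarith) (pow_pos hlam d)
  exact Real.rpow_div_le_of_pow_le (by norm_num) (by positivity) hd.ne' hpow
end
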